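/- (Sandwich-to-remote lemma.) Let (s,U,t) be a weak h-hop negative sandwich, i.e., d^h(s,u) + d^h(u,t) ≤ 0 for all u ∈ U. Suppose the pair (s,t) has (η+h)-hop betweenness at most n/ℓ, i.e., at most n/ℓ vertices v satisfy d^{η+h}(s,v) + d^{η+h}(v,t) < 0. Define the potential φ(v) = min( d^h(s,v), −d^h(v,t) ). Then φ is valid, and every vertex negatively reachable within η hops from U in the reweighted graph G_φ satisfies d^{η+h}(s,v) + d^{η+h}(v,t) < 0; consequently the η-hop negative reach of U in G_φ has at most n/ℓ vertices. -/
import Mathlib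


open Classical

variable {V : Type*}

/-- `IsWalk E s t p`: `p` is the list of successive vertices (after `s`) of a walk
from `s` to `t` in the directed graph with edge relation `E`. -/
def IsWalk (E : V → V → Prop) : V → V → List V → Prop
  | s, t, [] => s = t
  | s, t, v :: p => E s v ∧ IsWalk E v t p

/-- Length of a walk: sum of edge lengths. -/
noncomputable def walkLen (ℓ : V → V → ℝ) : V → List V → ℝ
  | _, [] => 0
  | s, v :: p => ℓ s v + walkLen ℓ v p

/-- Number of hops of a walk: number of designated (negative) edges, with multiplicity. -/
noncomputable def hopCount (neg : V → V → Prop) : V → List V → ℕ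
  | _, [] => 0
  | s, v :: p => (if neg s v then 1 else 0) + hopCount neg v p

/-- `h`-hop distance: infimum length over walks from `s` to `t` with at most `h` hops. -/
noncomputable def hopDist (E : V → V → Prop) (ℓ : V → V → ℝ) (neg : V → V → Prop)
    (h : ℕ) (s t : V) : EReal :=
  ⨅ p ∈ {p : List V | IsWalk E s t p ∧ hopCount neg s p ≤ h}, (walkLen ℓ s p : EReal)

/-- Distance: infimum length over all walks from `s` to `t`. -/
noncomputable def walkDist (E : V → V → Prop) (ℓ : V → V → ℝ) (s t : V) : EReal :=
  ⨅ p ∈ {p : List V | IsWalk E s t p}, (walkLen ℓ s p : EReal)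

lemma isWalk_append {E : V → V → Prop} {s u t : V} {p q : List V}
    (hp : IsWalk E s u p) (hq : IsWalk E u t q) : IsWalk E s t (p ++ q) := by
  induction p generalizing s with
  | nil => cases hp; simpa using hq
  | cons a p ih => exact ⟨hp.1, ih hp.2⟩

lemma walkLen_append {E : V → V → Prop} (ℓ : V → V → ℝ) {s u : V} {p : List V}
    (hp : IsWalk E s u p) (q : List V) :
    walkLen ℓ s (p ++ q) = walkLen ℓ s p + walkLen ℓ u q := by
  induction p generalizing s with
  | nil => cases hp; simp [walkLen]
  | cons a p ih => simp [walkLen, ih hp.2]; ring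

lemma hopCount_append {E : V → V → Prop} (neg : V → V → Prop) {s u : V} {p : List V}
    (hp : IsWalk E s u p) (q : List V) :
    hopCount neg s (p ++ q) = hopCount neg s p + hopCount neg u q := by
  induction p generalizing s with
  | nil => cases hp; simp [hopCount]
  | cons a p ih => simp [hopCount, ih hp.2]; ring

lemma walkLen_reweight {E : V → V → Prop} (ℓ : V → V → ℝ) (φ : V → ℝ) {s v : V} {p : List V}
    (hp : IsWalk E s v p) :
    walkLen (fun a b => ℓ a b + φ a - φ b) s p = walkLen ℓ s p + φ s - φ v := by
  induction p generalizing s with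
  | nil => cases hp; simp [walkLen]
  | cons a p ih => simp [walkLen, ih hp.2]; ring

lemma hopDist_le_walkLen {E : V → V → Prop} {ℓ : V → V → ℝ} {neg : V → V → Prop}
    {h : ℕ} {s t : V} {p : List V} (hp : IsWalk E s t p) (hc : hopCount neg s p ≤ h) :
    hopDist E ℓ neg h s t ≤ (walkLen ℓ s p : EReal) :=
  iInf₂_le p ⟨hp, hc⟩

lemma hopDist_mono {E : V → V → Prop} {ℓ : V → V → ℝ} {neg : V → V → Prop}
    {k k' : ℕ} (hk : k ≤ k') {s t : V} {a b : ℝ}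
    (ha : hopDist E ℓ neg k s t = (a : EReal)) (hb : hopDist E ℓ neg k' s t = (b : EReal)) :
    b ≤ a := by
  rw [← EReal.coe_le_coe_iff, ← ha, ← hb]
  exact iInf_le_iInf_of_subset (fun p hp => ⟨hp.1, hp.2.trans hk⟩)

/-- concat on the right -/
lemma hopDist_concat {E : V → V → Prop} {ℓ : V → V → ℝ} {neg : V → V → Prop}
    {k1 k2 : ℕ} {s u v : V} {a b : ℝ} {p : List V}
    (ha : hopDist E ℓ neg k1 s u = (a : EReal))
    (hb : hopDist E ℓ neg (k1 + k2) s v = (b : EReal))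
    (hp : IsWalk E u v p) (hc : hopCount neg u p ≤ k2) :
    b ≤ a + walkLen ℓ u p := by
  refine le_of_forall_pos_le_add fun ε hε => ?_
  have h1 : hopDist E ℓ neg k1 s u < ((a + ε : ℝ) : EReal) := by
    rw [ha]; exact_mod_cast lt_add_of_pos_right a hε
  simp only [hopDist, iInf_lt_iff, Set.mem_setOf_eq] at h1
  obtain ⟨q, ⟨hq, hqc⟩, hql⟩ := h1
  have hw : IsWalk E s v (q ++ p) := isWalk_append hq hp
  have hcnt : hopCount neg s (q ++ p) ≤ k1 + k2 := by
    rw [hopCount_append neg hq]; exact Nat.add_le_add hqc hc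
  have h2 : (b : EReal) ≤ (walkLen ℓ s (q ++ p) : EReal) := hb ▸ hopDist_le_walkLen hw hcnt
  rw [EReal.coe_le_coe_iff] at h2
  rw [EReal.coe_lt_coe_iff] at hql
  rw [walkLen_append ℓ hq] at h2
  linarith

/-- concat on the left -/
lemma hopDist_concat_left {E : V → V → Prop} {ℓ : V → V → ℝ} {neg : V → V → Prop}
    {k1 k2 : ℕ} {u v t : V} {a b : ℝ} {p : List V}
    (ha : hopDist E ℓ neg k2 v t = (a : EReal))
    (hb : hopDist E ℓ neg (k1 + k2) u t = (b : EReal))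
    (hp : IsWalk E u v p) (hc : hopCount neg u p ≤ k1) :
    b ≤ walkLen ℓ u p + a := by
  refine le_of_forall_pos_le_add fun ε hε => ?_
  have h1 : hopDist E ℓ neg k2 v t < ((a + ε : ℝ) : EReal) := by
    rw [ha]; exact_mod_cast lt_add_of_pos_right a hε
  simp only [hopDist, iInf_lt_iff, Set.mem_setOf_eq] at h1
  obtain ⟨q, ⟨hq, hqc⟩, hql⟩ := h1
  have hw : IsWalk E u t (p ++ q) := isWalk_append hp hq
  have hcnt : hopCount neg u (p ++ q) ≤ k1 + k2 := by
    rw [hopCount_append neg hp]; exact Nat.add_le_add hc hqc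
  have h2 : (b : EReal) ≤ (walkLen ℓ u (p ++ q) : EReal) := hb ▸ hopDist_le_walkLen hw hcnt
  rw [EReal.coe_le_coe_iff] at h2
  rw [EReal.coe_lt_coe_iff] at hql
  rw [walkLen_append ℓ hp] at h2
  linarith


/-- Sandwich-to-remote lemma: given a weak `h`-hop negative sandwich `(s,U,t)` and
an `(η+h)`-hop betweenness bound `n/r` for `(s,t)`, the potential
`φ(v) = min(d^h(s,v), -d^h(v,t))` is valid, every vertex `η`-hop negatively
reachable from `U` in `G_φ` has `d^{η+h}(s,v) + d^{η+h}(v,t) < 0`, and hence the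
`η`-hop negative reach of `U` in `G_φ` has at most `n/r` vertices. -/
theorem sandwich_to_remote
    {V : Type*} [Fintype V] (E : V → V → Prop) (ℓ : V → V → ℝ)
    (s t : V) (U : Set V) (h η : ℕ) (r : ℝ)
    (ds dt : ℕ → V → ℝ)
    (hds : ∀ (k : ℕ) (v : V), hopDist E ℓ (fun a b => ℓ a b < 0) k s v = (ds k v : EReal))
    (hdt : ∀ (k : ℕ) (v : V), hopDist E ℓ (fun a b => ℓ a b < 0) k v t = (dt k v : EReal))
    (hsandwich : ∀ u ∈ U, ds h u + dt h u ≤ 0)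
    (hbetween : (Set.ncard {v : V | ds (η + h) v + dt (η + h) v < 0} : ℝ) ≤
      (Fintype.card V : ℝ) / r)
    (φ : V → ℝ) (hφ : ∀ v, φ v = min (ds h v) (-(dt h v))) :
    (∀ u v, E u v → 0 ≤ ℓ u v → 0 ≤ ℓ u v + φ u - φ v) ∧
    (∀ v : V, (∃ u ∈ U, ∃ p : List V, IsWalk E u v p ∧
        hopCount (fun a b => ℓ a b < 0) u p ≤ η ∧
        walkLen (fun a b => ℓ a b + φ a - φ b) u p < 0) →
      ds (η + h) v + dt (η + h) v < 0) ∧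
    ((Set.ncard {v : V | ∃ u ∈ U, ∃ p : List V, IsWalk E u v p ∧
        hopCount (fun a b => ℓ a b < 0) u p ≤ η ∧
        walkLen (fun a b => ℓ a b + φ a - φ b) u p < 0} : ℝ) ≤
      (Fintype.card V : ℝ) / r) := by
  have part2 : ∀ v : V, (∃ u ∈ U, ∃ p : List V, IsWalk E u v p ∧
        hopCount (fun a b => ℓ a b < 0) u p ≤ η ∧
        walkLen (fun a b => ℓ a b + φ a - φ b) u p < 0) →
      ds (η + h) v + dt (η + h) v < 0 := by
    intro v ⟨u, hu, p, hp, hpc, hplen⟩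
    rw [walkLen_reweight ℓ φ hp] at hplen
    -- φ u = ds h u
    have hφu : φ u = ds h u := by
      rw [hφ u, min_eq_left]
      linarith [hsandwich u hu]
    have hφv : φ v ≤ -(dt h v) := by rw [hφ v]; exact min_le_right _ _
    -- ds (η+h) v ≤ ds h u + walkLen p
    have h1 : ds (η + h) v ≤ ds h u + walkLen ℓ u p := by
      refine hopDist_concat (hds h u) ?_ hp hpc
      rw [Nat.add_comm h η]; exact hds (η + h) v
    -- dt (η+h) v ≤ dt h v
    have h2 : dt (η + h) v ≤ dt h v :=
      hopDist_mono (Nat.le_add_left h η) (hdt h v) (hdt (η + h) v)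
    linarith
  refine ⟨?_, part2, ?_⟩
  · intro u v huv hnn
    have hds1 : ds h v ≤ ds h u + ℓ u v := by
      have hw : IsWalk E u v [v] := ⟨huv, rfl⟩
      have hc : hopCount (fun a b => ℓ a b < 0) u [v] ≤ 0 := by
        simp [hopCount, not_lt.mpr hnn]
      have := hopDist_concat (k2 := 0) (hds h u) (hds (h + 0) v) hw hc
      simpa [walkLen] using this
    have hdt1 : dt h u ≤ ℓ u v + dt h v := by
      have hw : IsWalk E u v [v] := ⟨huv, rfl⟩
      have hc : hopCount (fun a b => ℓ a b < 0) u [v] ≤ 0 := by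
        simp [hopCount, not_lt.mpr hnn]
      have hb : hopDist E ℓ (fun a b => ℓ a b < 0) (0 + h) u t = (dt h u : EReal) := by
        rw [Nat.zero_add]; exact hdt h u
      have := hopDist_concat_left (hdt h v) hb hw hc
      simpa [walkLen] using this
    rw [hφ u, hφ v]
    rcases le_total (ds h u) (-(dt h u)) with hc | hc
    · rw [min_eq_left hc]
      have : min (ds h v) (-(dt h v)) ≤ ds h v := min_le_left _ _
      linarith
    · rw [min_eq_right hc]
      have : min (ds h v) (-(dt h v)) ≤ -(dt h v) := min_le_right _ _
      linarith
  · have hsub : {v : V | ∃ u ∈ U, ∃ p : List V, IsWalk E u v p ∧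
        hopCount (fun a b => ℓ a b < 0) u p ≤ η ∧
        walkLen (fun a b => ℓ a b + φ a - φ b) u p < 0} ⊆
      {v : V | ds (η + h) v + dt (η + h) v < 0} := fun v hv => part2 v hv
    have := Set.ncard_le_ncard hsub (Set.toFinite _)
    calc ((Set.ncard _ : ℕ) : ℝ) ≤ (Set.ncard {v : V | ds (η + h) v + dt (η + h) v < 0} : ℝ) :=
          Nat.cast_le.mpr this
      _ ≤ (Fintype.card V : ℝ) / r := hbetween
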